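/- arXiv:0903.3866 — 6 statements merged into one kernel-verified Lean document; each statement's English description precedes it below -/
import Mathlib

section
/- Let r, n be integers with 1 ≤ r < n-1. Then every complex zero z* of B_{r,n}(z) satisfies |z*| ≤ r/(n+1-r). -/
/-!
Scaling `z = R w` with `R = r / (n + 1 - r)` turns `B_{r,n}` into the polynomial in `w` with
coefficients `C(n,k) R^k`, which are nondecreasing in `k ≤ r` because
`C(n,k+1) / C(n,k) = (n-k)/(k+1) ≥ (n+1-r)/r`. By the Eneström–Kakeya theorem every zero of a
polynomial with nonnegative nondecreasing coefficients lies in the closed unit disc.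
-/

/-- For integers `1 ≤ r ≤ n`, the `r`-th section of the binomial expansion of `(1+z)^n`. -/
noncomputable def binomialSection (r n : ℕ) (z : ℂ) : ℂ :=
  ∑ k ∈ Finset.range (r + 1), (n.choose k : ℂ) * z ^ k

open Finset

theorem one_sub_mul_sum_range_mul_pow {R : Type*} [CommRing R] (c : ℕ → R) (w : R) (m : ℕ) :
    (1 - w) * ∑ k ∈ range (m + 1), c k * w ^ k
      = c 0 + ∑ k ∈ range m, (c (k + 1) - c k) * w ^ (k + 1) - c m * w ^ (m + 1) := by
  induction m with
  | zero => simp only [zero_add, range_one, sum_singleton, range_zero, sum_empty]; ring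
  | succ m ih =>
    rw [sum_range_succ, mul_add, ih, sum_range_succ (fun k => (c (k + 1) - c k) * w ^ (k + 1))]
    ring

theorem add_sum_sub_mul_pow_le {a : ℕ → ℝ} {m : ℕ} (h0 : 0 ≤ a 0)
    (hmono : ∀ k < m, a k ≤ a (k + 1)) {t : ℝ} (ht : 1 ≤ t) :
    a 0 + ∑ k ∈ range m, (a (k + 1) - a k) * t ^ (k + 1) ≤ a m * t ^ m := by
  have hterm : ∀ k ∈ range m, (a (k + 1) - a k) * t ^ (k + 1) ≤ (a (k + 1) - a k) * t ^ m :=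
    fun k hk => mul_le_mul_of_nonneg_left (pow_le_pow_right₀ ht (mem_range.mp hk))
      (sub_nonneg.mpr (hmono k (mem_range.mp hk)))
  calc a 0 + ∑ k ∈ range m, (a (k + 1) - a k) * t ^ (k + 1)
      ≤ a 0 * t ^ m + ∑ k ∈ range m, (a (k + 1) - a k) * t ^ m :=
        add_le_add (le_mul_of_one_le_right h0 (one_le_pow₀ ht)) (sum_le_sum hterm)
    _ = a m * t ^ m := by rw [← sum_mul, sum_range_sub a]; ring

/-- The Eneström–Kakeya theorem. -/
theorem norm_le_one_of_sum_monotone_coeff_mul_pow_eq_zero {a : ℕ → ℝ} {m : ℕ} (h0 : 0 ≤ a 0)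
    (hmono : ∀ k < m, a k ≤ a (k + 1)) (hm : 0 < a m) {w : ℂ}
    (hw : ∑ k ∈ range (m + 1), (a k : ℂ) * w ^ k = 0) : ‖w‖ ≤ 1 := by
  by_contra! hw1
  have hidentity : (a m : ℂ) * w ^ (m + 1)
      = a 0 + ∑ k ∈ range m, ((a (k + 1) : ℂ) - a k) * w ^ (k + 1) := by
    have := one_sub_mul_sum_range_mul_pow (fun k => (a k : ℂ)) w m
    rw [hw, mul_zero] at this
    exact (sub_eq_zero.mp this.symm).symm
  have hnorm : a m * ‖w‖ ^ (m + 1) ≤ a 0 + ∑ k ∈ range m, (a (k + 1) - a k) * ‖w‖ ^ (k + 1) := by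
    have hlhs : ‖(a m : ℂ) * w ^ (m + 1)‖ = a m * ‖w‖ ^ (m + 1) := by
      rw [norm_mul, norm_pow, Complex.norm_real, Real.norm_of_nonneg hm.le]
    rw [← hlhs, hidentity]
    refine (norm_add_le _ _).trans (add_le_add ?_ ((norm_sum_le _ _).trans (sum_le_sum ?_)))
    · rw [Complex.norm_real, Real.norm_of_nonneg h0]
    · intro k hk
      rw [norm_mul, norm_pow, ← Complex.ofReal_sub, Complex.norm_real,
        Real.norm_of_nonneg (sub_nonneg.mpr (hmono k (mem_range.mp hk)))]
  have hpow : a m * ‖w‖ ^ m < a m * ‖w‖ ^ (m + 1) :=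
    mul_lt_mul_of_pos_left (pow_lt_pow_right₀ hw1 m.lt_succ_self) hm
  linarith [add_sum_sub_mul_pow_le h0 hmono hw1.le]

theorem choose_mul_le_choose_succ_mul {n r k : ℕ} (hkr : k < r) (hrn : r ≤ n) :
    (n.choose k : ℝ) * (n + 1 - r) ≤ n.choose (k + 1) * r := by
  have hsucc : (n.choose (k + 1) : ℝ) * (k + 1) = n.choose k * (n - k) := by
    have := congrArg (Nat.cast (R := ℝ)) (Nat.choose_succ_right_eq n k)
    push_cast [Nat.cast_sub (hkr.trans_le hrn).le] at this
    exact this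
  have hkr' : (k : ℝ) + 1 ≤ r := by exact_mod_cast hkr
  refine le_of_mul_le_mul_right ?_ (by positivity : (0 : ℝ) < k + 1)
  -- after `hsucc`, the two sides differ by `C(n,k) (n+1) (r-k-1)`
  nlinarith [mul_nonneg (mul_nonneg (Nat.cast_nonneg (n.choose k) : (0 : ℝ) ≤ _)
    (sub_nonneg.mpr hkr')) (by positivity : (0 : ℝ) ≤ n + 1)]

theorem choose_mul_pow_le_choose_succ_mul_pow {n r k : ℕ} (hkr : k < r) (hrn : r ≤ n) :
    (n.choose k : ℝ) * (r / (n + 1 - r)) ^ k ≤ n.choose (k + 1) * (r / (n + 1 - r)) ^ (k + 1) := by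
  have hden : (0 : ℝ) < n + 1 - r := by
    have : (r : ℝ) ≤ n := by exact_mod_cast hrn
    linarith
  have hstep : (n.choose k : ℝ) ≤ n.choose (k + 1) * (r / (n + 1 - r)) := by
    rw [← mul_div_assoc, le_div_iff₀ hden]
    exact choose_mul_le_choose_succ_mul hkr hrn
  rw [pow_succ, ← mul_assoc, mul_right_comm]
  gcongr

theorem zeros_in_circle (r n : ℕ) (hr : 1 ≤ r) (hrn : r + 1 < n)
    (z : ℂ) (hz : binomialSection r n z = 0) :
    ‖z‖ ≤ (r : ℝ) / ((n : ℝ) + 1 - (r : ℝ)) := by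
  set R : ℝ := (r : ℝ) / ((n : ℝ) + 1 - (r : ℝ))
  have hrn' : r ≤ n := by omega
  have hR : 0 < R := div_pos (by exact_mod_cast hr) (by linarith [(Nat.cast_le (α := ℝ)).mpr hrn'])
  set a : ℕ → ℝ := fun k => n.choose k * R ^ k
  have hroot : ∑ k ∈ range (r + 1), (a k : ℂ) * (z / R) ^ k = 0 := by
    rw [← hz, binomialSection]
    refine sum_congr rfl fun k _ => ?_
    rw [Complex.ofReal_mul, Complex.ofReal_pow, Complex.ofReal_natCast, mul_assoc, ← mul_pow,
      mul_div_cancel₀ z (Complex.ofReal_ne_zero.mpr hR.ne')]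
  have hmono : ∀ k < r, a k ≤ a (k + 1) := fun k hk => choose_mul_pow_le_choose_succ_mul_pow hk hrn'
  have hw : ‖z / R‖ ≤ 1 := norm_le_one_of_sum_monotone_coeff_mul_pow_eq_zero (by simp [a]) hmono
    (mul_pos (by exact_mod_cast Nat.choose_pos hrn') (pow_pos hR r)) hroot
  rwa [norm_div, Complex.norm_real, Real.norm_of_nonneg hR.le, div_le_one hR] at hw
end

section
/- Let r, n be integers with 1 ≤ r < n-1, and set γ = r/(n-1) (so 0 < γ < 1). Then every complex zero z* of B_{r,n}(z) satisfies |z* - γ²/(1-γ²)| ≤ γ/(1-γ²). -/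
/-!
Write `n = m + r + 1`. Pascal's rule and induction on `r` give
`B_{r,n}(z) = ∑_{j ≤ r} C(m+j, j) z^j (1+z)^(r-j)`, so (as `z = -1` is not a zero) `w = z/(1+z)`
is a zero of `∑_{j ≤ r} C(m+j, j) w^j`. The ratios `C(m+j, j) / C(m+j+1, j+1) = (j+1)/(m+j+1)`
are at most `r/(m+r) = γ`, so the Eneström–Kakeya theorem gives `|w| ≤ γ`, i.e.
`|z| ≤ γ |1+z|`; this Apollonius disc is the disc of the statement.
-/

open Finset

theorem enestrom_kakeya {n : ℕ} {a : ℕ → ℝ} (h0 : 0 ≤ a 0) (ha : ∀ j < n, a j ≤ a (j + 1))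
    (hn : 0 < a n) {z : ℂ} (hz : ∑ j ∈ range (n + 1), (a j : ℂ) * z ^ j = 0) : ‖z‖ ≤ 1 := by
  by_contra! hz1
  -- the coefficients of `(1 - z) * ∑ a j z^j`, which telescope to `a n` when `‖z‖ ≥ 1`
  have htop : (a n : ℂ) * z ^ (n + 1) =
      a 0 + ∑ j ∈ range n, ((a (j + 1) - a j : ℝ) : ℂ) * z ^ (j + 1) := by
    have hshift := sum_range_succ' (fun j ↦ (a j : ℂ) * z ^ j) n
    have hmul := sum_range_succ (fun j ↦ (a j : ℂ) * z ^ (j + 1)) n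
    have hz' : ∑ j ∈ range (n + 1), (a j : ℂ) * z ^ (j + 1) = 0 := by
      simp_rw [pow_succ, ← mul_assoc, ← sum_mul, hz, zero_mul]
    simp only [Complex.ofReal_sub, sub_mul, sum_sub_distrib]
    linear_combination hz' - hmul + hshift - hz
  have hbound : a n * ‖z‖ ^ (n + 1) ≤ a n * ‖z‖ ^ n :=
    calc a n * ‖z‖ ^ (n + 1) = ‖(a n : ℂ) * z ^ (n + 1)‖ := by
          rw [norm_mul, norm_pow, Complex.norm_real, Real.norm_of_nonneg hn.le]
      _ ≤ a 0 + ∑ j ∈ range n, (a (j + 1) - a j) * ‖z‖ ^ (j + 1) := by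
          rw [htop]
          refine (norm_add_le _ _).trans (add_le_add (by simp [abs_of_nonneg h0]) ?_)
          refine (norm_sum_le _ _).trans (sum_le_sum fun j hj ↦ le_of_eq ?_)
          rw [norm_mul, norm_pow, Complex.norm_real,
            Real.norm_of_nonneg (sub_nonneg.2 (ha j (mem_range.1 hj)))]
      _ ≤ a 0 * ‖z‖ ^ n + ∑ j ∈ range n, (a (j + 1) - a j) * ‖z‖ ^ n := by
          gcongr with j hj
          · exact le_mul_of_one_le_right h0 (one_le_pow₀ hz1.le)
          · exact sub_nonneg.2 (ha j (mem_range.1 hj))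
          · exact hz1.le
          · exact mem_range.1 hj
      _ = a n * ‖z‖ ^ n := by rw [← sum_mul, sum_range_sub a, ← add_mul, add_sub_cancel]
  rw [pow_succ, ← mul_assoc] at hbound
  exact hz1.not_ge ((mul_le_iff_le_one_right (by positivity)).1 hbound)

theorem enestrom_kakeya_of_le_mul {n : ℕ} {a : ℕ → ℝ} {ρ : ℝ} (hρ : 0 < ρ) (h0 : 0 ≤ a 0)
    (ha : ∀ j < n, a j ≤ ρ * a (j + 1)) (hn : 0 < a n) {z : ℂ}
    (hz : ∑ j ∈ range (n + 1), (a j : ℂ) * z ^ j = 0) : ‖z‖ ≤ ρ := by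
  have hscaled : ‖z / ρ‖ ≤ 1 := by
    refine enestrom_kakeya (n := n) (a := fun j ↦ a j * ρ ^ j) (by simpa using h0)
      (fun j hj ↦ ?_) (mul_pos hn (pow_pos hρ n)) ?_
    · rw [pow_succ, ← mul_assoc, mul_right_comm]
      exact mul_le_mul_of_nonneg_right (by linarith [ha j hj]) (by positivity)
    · have hρ' : (ρ : ℂ) ≠ 0 := by exact_mod_cast hρ.ne'
      simpa [div_pow, mul_assoc, mul_div_cancel₀ _ (pow_ne_zero _ hρ')] using hz
  rwa [norm_div, Complex.norm_real, Real.norm_of_nonneg hρ.le, div_le_one hρ] at hscaled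

theorem binomialSection_succ_succ (r N : ℕ) (z : ℂ) :
    binomialSection (r + 1) (N + 1) z =
      (1 + z) * binomialSection r N z + (N.choose (r + 1) : ℂ) * z ^ (r + 1) := by
  have hpascal := sum_range_succ' (fun k ↦ (N.choose k : ℂ) * z ^ k) (r + 1)
  rw [sum_range_succ, Nat.choose_zero_right] at hpascal
  have hshift : ∑ k ∈ range (r + 1), (N.choose k : ℂ) * z ^ (k + 1) =
      z * ∑ k ∈ range (r + 1), (N.choose k : ℂ) * z ^ k := by
    rw [mul_sum]
    exact sum_congr rfl fun k _ ↦ by ring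
  simp only [binomialSection, sum_range_succ' _ (r + 1), Nat.choose_succ_succ', Nat.cast_add,
    add_mul, sum_add_distrib, Nat.choose_zero_right]
  linear_combination hshift - hpascal

theorem binomialSection_add_add_one (m r : ℕ) (z : ℂ) :
    binomialSection r (m + r + 1) z =
      ∑ j ∈ range (r + 1), ((m + j).choose j : ℂ) * z ^ j * (1 + z) ^ (r - j) := by
  induction r with
  | zero => simp [binomialSection]
  | succ r ih =>
    rw [← add_assoc, binomialSection_succ_succ, ih, sum_range_succ _ (r + 1), mul_sum,
      Nat.sub_self, pow_zero, mul_one, add_assoc m r 1]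
    congr 1
    refine sum_congr rfl fun j hj ↦ ?_
    rw [Nat.sub_add_comm (mem_range_succ_iff.1 hj), pow_succ]
    ring

theorem binomialSection_add_add_one_eq_mul (m r : ℕ) {z : ℂ} (hz : 1 + z ≠ 0) :
    binomialSection r (m + r + 1) z =
      (1 + z) ^ r * ∑ j ∈ range (r + 1), ((m + j).choose j : ℂ) * (z / (1 + z)) ^ j := by
  rw [binomialSection_add_add_one, mul_sum]
  refine sum_congr rfl fun j hj ↦ ?_
  rw [div_pow, pow_sub₀ _ hz (mem_range_succ_iff.1 hj)]
  field_simp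

theorem binomialSection_add_add_one_neg_one_ne_zero (m r : ℕ) :
    binomialSection r (m + r + 1) (-1) ≠ 0 := by
  rw [binomialSection_add_add_one, sum_range_succ, add_neg_cancel, Nat.sub_self,
    sum_eq_zero fun j hj ↦ by rw [zero_pow (Nat.sub_ne_zero_of_lt (mem_range.1 hj)), mul_zero]]
  simp [Nat.choose_pos (Nat.le_add_left r m) |>.ne']

theorem add_mul_choose_le_mul_choose_succ {m r j : ℕ} (hj : j < r) :
    (m + r) * (m + j).choose j ≤ r * (m + j + 1).choose (j + 1) := by
  refine Nat.le_of_mul_le_mul_right ?_ j.succ_pos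
  calc (m + r) * (m + j).choose j * (j + 1) = (m + r) * (j + 1) * (m + j).choose j := by ring
    _ ≤ r * (m + j + 1) * (m + j).choose j :=
        Nat.mul_le_mul_right _ (by nlinarith [Nat.mul_le_mul_left m hj])
    _ = r * (m + j + 1).choose (j + 1) * (j + 1) := by
        rw [mul_assoc, Nat.add_one_mul_choose_eq]; ring

theorem norm_sub_le_of_norm_le_mul_norm_one_add {γ : ℝ} (hγ0 : 0 ≤ γ) (hγ1 : γ < 1) {z : ℂ}
    (h : ‖z‖ ≤ γ * ‖1 + z‖) :
    ‖z - ((γ ^ 2 / (1 - γ ^ 2) : ℝ) : ℂ)‖ ≤ γ / (1 - γ ^ 2) := by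
  have hu : 0 < 1 - γ ^ 2 := by nlinarith
  have hsq : ‖z‖ ^ 2 ≤ γ ^ 2 * ‖1 + z‖ ^ 2 := by
    rw [← mul_pow]; exact pow_le_pow_left₀ (norm_nonneg z) h 2
  -- completing the square in `‖z‖² - γ² ‖1 + z‖²`
  have hid : ((1 - γ ^ 2) * ‖z - ((γ ^ 2 / (1 - γ ^ 2) : ℝ) : ℂ)‖) ^ 2 =
      (1 - γ ^ 2) * (‖z‖ ^ 2 - γ ^ 2 * ‖1 + z‖ ^ 2) + γ ^ 2 := by
    simp only [mul_pow, Complex.sq_norm, Complex.normSq_apply, Complex.sub_re, Complex.sub_im,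
      Complex.add_re, Complex.add_im, Complex.ofReal_re, Complex.ofReal_im, Complex.one_re,
      Complex.one_im]
    field_simp
    ring
  rw [le_div_iff₀ hu, mul_comm, ← pow_le_pow_iff_left₀ (by positivity) hγ0 two_ne_zero, hid]
  nlinarith

theorem zeros_in_second_circle (r n : ℕ) (hr : 1 ≤ r) (hrn : r + 1 < n)
    (γ : ℝ) (hγ : γ = (r : ℝ) / ((n : ℝ) - 1))
    (z : ℂ) (hz : binomialSection r n z = 0) :
    ‖z - ((γ ^ 2 / (1 - γ ^ 2) : ℝ) : ℂ)‖ ≤ γ / (1 - γ ^ 2) := by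
  obtain ⟨m, rfl⟩ : ∃ m, n = m + r + 1 := ⟨n - r - 1, by omega⟩
  have hmr : (0 : ℝ) < m + r := by positivity
  replace hγ : γ = r / (m + r) := by rw [hγ]; push_cast; ring_nf
  have hγ0 : 0 < γ := by rw [hγ]; positivity
  have hγ1 : γ < 1 := by
    rw [hγ, div_lt_one hmr]
    exact_mod_cast (show r < m + r by omega)
  have h1z : 1 + z ≠ 0 := by
    intro h
    obtain rfl : z = -1 := by linear_combination h
    exact binomialSection_add_add_one_neg_one_ne_zero m r hz
  rw [binomialSection_add_add_one_eq_mul m r h1z, mul_eq_zero] at hz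
  have hw : ‖z / (1 + z)‖ ≤ γ := by
    refine enestrom_kakeya_of_le_mul (a := fun j ↦ ((m + j).choose j : ℝ)) hγ0 (by simp)
      (fun j hj ↦ ?_) (Nat.cast_pos.2 (Nat.choose_pos (Nat.le_add_left r m)))
      (by exact_mod_cast hz.resolve_left (pow_ne_zero r h1z))
    rw [hγ, div_mul_eq_mul_div, le_div_iff₀ hmr, mul_comm]
    exact_mod_cast add_mul_choose_le_mul_choose_succ hj
  rw [norm_div, div_le_iff₀ (norm_pos_iff.2 h1z)] at hw
  exact norm_sub_le_of_norm_le_mul_norm_one_add hγ0.le hγ1 hw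
end

section
/- Let r, n be integers with 1 ≤ r < n-1, and set β = r/n. If z ∈ ℂ satisfies |z| ≤ β/(1-β) and |z|^β ≤ K_β · |1+z|, then B_{r,n}(z) ≠ 0. In particular, all zeros of B_{r,n} lie exterior to the curve C_β. -/
/-- The constant `K_α = α^α (1-α)^(1-α)` for `0 < α < 1`. -/
noncomputable def Kconst (α : ℝ) : ℝ := α ^ α * (1 - α) ^ (1 - α)

open Finset

lemma rpow_pow_eq_pow {x β : ℝ} (hx : 0 ≤ x) {r n : ℕ} (h : β * n = r) :
    (x ^ β) ^ n = x ^ r := by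
  rw [← Real.rpow_mul_natCast hx, h, Real.rpow_natCast]

lemma Kconst_pow {β : ℝ} (hβ0 : 0 ≤ β) (hβ1 : β ≤ 1) {r n : ℕ} (hrn : r ≤ n)
    (hβn : β * n = r) : Kconst β ^ n = β ^ r * (1 - β) ^ (n - r) := by
  have h1β : (1 - β) * n = ((n - r : ℕ) : ℝ) := by
    rw [Nat.cast_sub hrn, ← hβn]
    ring
  rw [Kconst, mul_pow, rpow_pow_eq_pow hβ0 hβn, rpow_pow_eq_pow (by linarith) h1β]

lemma binomialSection_add_sum_Ico {r n : ℕ} (hrn : r ≤ n) (z : ℂ) :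
    binomialSection r n z + ∑ k ∈ Ico (r + 1) (n + 1), (n.choose k : ℂ) * z ^ k
      = (1 + z) ^ n := by
  rw [binomialSection, sum_range_add_sum_Ico _ (by omega), add_comm (1 : ℂ), add_pow]
  exact sum_congr rfl fun k _ => by ring

lemma norm_one_add_pow_le_of_binomialSection_eq_zero {r n : ℕ} (hrn : r ≤ n) {z : ℂ}
    (hz : binomialSection r n z = 0) :
    ‖1 + z‖ ^ n ≤ ∑ k ∈ Ico (r + 1) (n + 1), (n.choose k : ℝ) * ‖z‖ ^ k := by
  rw [← norm_pow, ← binomialSection_add_sum_Ico hrn, hz, zero_add]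
  refine (norm_sum_le _ _).trans_eq (sum_congr rfl fun k _ => ?_)
  rw [norm_mul, norm_pow, Complex.norm_natCast]

lemma sum_Ico_choose_mul_pow_mul_pow_lt_one {β : ℝ} (hβ0 : 0 ≤ β) (hβ1 : β < 1) (r n : ℕ) :
    ∑ k ∈ Ico (r + 1) (n + 1), (n.choose k : ℝ) * (β ^ k * (1 - β) ^ (n - k)) < 1 := by
  have h1β : 0 < 1 - β := sub_pos.mpr hβ1
  set p : ℕ → ℝ := fun k => (n.choose k : ℝ) * (β ^ k * (1 - β) ^ (n - k))
  have hp : ∀ k, 0 ≤ p k := fun k => by positivity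
  have htotal : ∑ k ∈ range (n + 1), p k = 1 := by
    have := add_pow β (1 - β) n
    rw [add_sub_cancel, one_pow] at this
    rw [this]
    exact sum_congr rfl fun k _ => by ring
  have hsubset : Ico (r + 1) (n + 1) ⊆ (range (n + 1)).erase 0 := fun k hk => by
    simp only [mem_Ico, mem_erase, mem_range] at hk ⊢
    omega
  calc ∑ k ∈ Ico (r + 1) (n + 1), p k ≤ ∑ k ∈ (range (n + 1)).erase 0, p k :=
        sum_le_sum_of_subset_of_nonneg hsubset fun k _ _ => hp k
    _ = 1 - (1 - β) ^ n := by
        have hp0 : p 0 = (1 - β) ^ n := by simp [p]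
        linarith [add_sum_erase (range (n + 1)) p (mem_range.mpr n.succ_pos)]
    _ < 1 := by linarith [pow_pos h1β n]

lemma pow_le_of_le_div_one_sub {β t c : ℝ} (hβ1 : β < 1) (ht : 0 ≤ t) (htβ : t ≤ β / (1 - β))
    {r k n : ℕ} (hrk : r ≤ k) (hkn : k ≤ n) (htr : t ^ r ≤ β ^ r * (1 - β) ^ (n - r) * c) :
    t ^ k ≤ β ^ k * (1 - β) ^ (n - k) * c := by
  have h1β : 1 - β ≠ 0 := by linarith
  calc t ^ k = t ^ r * t ^ (k - r) := by rw [← pow_add, Nat.add_sub_cancel' hrk]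
    _ ≤ β ^ r * (1 - β) ^ (n - r) * c * (β / (1 - β)) ^ (k - r) :=
      mul_le_mul htr (pow_le_pow_left₀ ht htβ _) (by positivity)
        ((by positivity : 0 ≤ t ^ r).trans htr)
    _ = β ^ k * (1 - β) ^ (n - k) * c := by
      rw [div_pow, show n - r = (n - k) + (k - r) by omega, pow_add,
        show k = r + (k - r) by omega, pow_add, Nat.add_sub_cancel_left]
      field_simp

lemma binomialSection_ne_zero_of_pow_le {β : ℝ} (hβ0 : 0 ≤ β) (hβ1 : β < 1) {r n : ℕ}
    (hrn : r ≤ n) {z : ℂ} (hz : ‖z‖ ≤ β / (1 - β))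
    (hzr : ‖z‖ ^ r ≤ β ^ r * (1 - β) ^ (n - r) * ‖1 + z‖ ^ n) (hz1 : z ≠ -1) :
    binomialSection r n z ≠ 0 := by
  intro hB
  have ha : 0 < ‖1 + z‖ ^ n :=
    pow_pos (norm_pos_iff.mpr fun h => hz1 (by linear_combination h)) n
  have := calc ‖1 + z‖ ^ n
      ≤ ∑ k ∈ Ico (r + 1) (n + 1), (n.choose k : ℝ) * ‖z‖ ^ k :=
        norm_one_add_pow_le_of_binomialSection_eq_zero hrn hB
    _ ≤ ∑ k ∈ Ico (r + 1) (n + 1),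
          (n.choose k : ℝ) * (β ^ k * (1 - β) ^ (n - k) * ‖1 + z‖ ^ n) :=
        sum_le_sum fun k hk => by
          rw [mem_Ico] at hk
          exact mul_le_mul_of_nonneg_left
            (pow_le_of_le_div_one_sub hβ1 (norm_nonneg z) hz (by omega) (by omega) hzr)
            (Nat.cast_nonneg _)
    _ = (∑ k ∈ Ico (r + 1) (n + 1), (n.choose k : ℝ) * (β ^ k * (1 - β) ^ (n - k)))
          * ‖1 + z‖ ^ n := by
        rw [sum_mul]
        exact sum_congr rfl fun k _ => by ring
    _ < 1 * ‖1 + z‖ ^ n :=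
        mul_lt_mul_of_pos_right (sum_Ico_choose_mul_pow_mul_pow_lt_one hβ0 hβ1 r n) ha
    _ = ‖1 + z‖ ^ n := one_mul _
  exact lt_irrefl _ this

theorem no_zeros_inside_curve_general (r n : ℕ) (hrn : r + 1 < n)
    (β : ℝ) (hβ : β = (r : ℝ) / (n : ℝ))
    (z : ℂ) (hz1 : ‖z‖ ≤ β / (1 - β))
    (hz2 : ‖z‖ ^ β ≤ Kconst β * ‖1 + z‖) :
    binomialSection r n z ≠ 0 := by
  have hn : (0 : ℝ) < n := by exact_mod_cast (by omega : 0 < n)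
  have hβn : β * n = r := by rw [hβ]; field_simp
  have hβ0 : 0 ≤ β := by rw [hβ]; positivity
  have hβ1 : β < 1 := by rw [hβ, div_lt_one hn]; exact_mod_cast (by omega : r < n)
  have hz_ne : z ≠ -1 := by
    rintro rfl
    norm_num at hz2
  refine binomialSection_ne_zero_of_pow_le hβ0 hβ1 (by omega) hz1 ?_ hz_ne
  calc ‖z‖ ^ r = (‖z‖ ^ β) ^ n := (rpow_pow_eq_pow (norm_nonneg z) hβn).symm
    _ ≤ (Kconst β * ‖1 + z‖) ^ n := pow_le_pow_left₀ (by positivity) hz2 n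
    _ = β ^ r * (1 - β) ^ (n - r) * ‖1 + z‖ ^ n := by
      rw [mul_pow, Kconst_pow hβ0 hβ1.le (by omega) hβn]

theorem no_zeros_inside_curve (r n : ℕ) (hr : 1 ≤ r) (hrn : r + 1 < n)
    (β : ℝ) (hβ : β = (r : ℝ) / (n : ℝ))
    (z : ℂ) (hz1 : ‖z‖ ≤ β / (1 - β))
    (hz2 : ‖z‖ ^ β ≤ Kconst β * ‖1 + z‖) :
    binomialSection r n z ≠ 0 :=
  no_zeros_inside_curve_general r n hrn β hβ z hz1 hz2
end

section
/- Fix 0 < α < 1. For every θ ∈ [0, π] there exists a unique real r with 0 < r ≤ α/(1-α) such that r^α = K_α · |1 + r e^{iθ}|. Consequently, C_α is a closed curve symmetric about the real axis, starlike with respect to 0, meeting each ray from the origin with argument in [-π, π] in exactly one point, and it passes through the point z_α = α/(1-α). -/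
/-- The curve `C_α = {z : |z|^α / |1+z| = K_α, |z| ≤ α/(1-α)}`. -/
def curveC (α : ℝ) : Set ℂ :=
  {z : ℂ | ‖z‖ ^ α / ‖1 + z‖ = Kconst α ∧
    ‖z‖ ≤ α / (1 - α)}

open Set

section NormSqRatio

variable {α c s t : ℝ}

/-- `R(t) = |1 + t e^{iθ}|² t^{-2α}` for `c = cos θ`. -/
noncomputable def normSqRatio (α c t : ℝ) : ℝ := (1 + 2 * c * t + t ^ 2) * t ^ (-(2 * α))

/-- The quadratic `q`: `-t ^ (2α + 1) / 2` times the derivative of `normSqRatio α c` at `t` (see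
`hasDerivAt_normSqRatio`). -/
def normSqRatioCrit (α c t : ℝ) : ℝ := α + (2 * α - 1) * c * t + (α - 1) * t ^ 2

theorem hasDerivAt_normSqRatio (ht : 0 < t) :
    HasDerivAt (normSqRatio α c) (-2 * normSqRatioCrit α c t * t ^ (-(2 * α) - 1)) t := by
  have hQ : HasDerivAt (fun s : ℝ => 1 + 2 * c * s + s ^ 2) (2 * c + 2 * t) t := by
    simpa [Pi.add_def] using
      (((hasDerivAt_id t).const_mul (2 * c)).const_add 1).add (hasDerivAt_pow 2 t)
  refine (hQ.mul (Real.hasDerivAt_rpow_const (p := -(2 * α)) (Or.inl ht.ne'))).congr_deriv ?_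
  rw [show t ^ (-(2 * α)) = t * t ^ (-(2 * α) - 1) by
    rw [Real.rpow_sub_one ht.ne']; field_simp]
  unfold normSqRatioCrit
  ring

theorem normSqRatioCrit_neg_of_lt (hα0 : 0 ≤ α) (hα1 : α < 1) (hs : 0 < s) (hst : s < t)
    (hcs : normSqRatioCrit α c s ≤ 0) : normSqRatioCrit α c t < 0 := by
  have key : s * normSqRatioCrit α c t
      = t * normSqRatioCrit α c s + (s - t) * (α + (1 - α) * s * t) := by
    unfold normSqRatioCrit; ring
  have hpos : 0 < α + (1 - α) * s * t := by
    have := mul_pos (mul_pos (sub_pos.2 hα1) hs) (hs.trans hst)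
    linarith
  have : s * normSqRatioCrit α c t < 0 := by
    rw [key]
    nlinarith [mul_nonpos_of_nonneg_of_nonpos (hs.trans hst).le hcs]
  exact neg_of_mul_neg_right this hs.le

theorem strictMonoOn_normSqRatio (hα0 : 0 ≤ α) (hα1 : α < 1) (hs : 0 < s)
    (hcs : normSqRatioCrit α c s ≤ 0) : StrictMonoOn (normSqRatio α c) (Ici s) := by
  refine strictMonoOn_of_hasDerivWithinAt_pos (convex_Ici s)
    (f' := fun t => -2 * normSqRatioCrit α c t * t ^ (-(2 * α) - 1))
    (fun t ht => (hasDerivAt_normSqRatio (hs.trans_le ht)).continuousAt.continuousWithinAt)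
    (fun t ht => ?_) (fun t ht => ?_) <;> rw [interior_Ici] at ht
  · exact (hasDerivAt_normSqRatio (hs.trans ht)).hasDerivWithinAt
  · exact mul_pos
      (mul_pos_of_neg_of_neg (by norm_num) (normSqRatioCrit_neg_of_lt hα0 hα1 hs ht hcs))
      (Real.rpow_pos_of_pos (hs.trans ht) _)

theorem normSqRatio_le_normSqRatio_one (hc : c ≤ 1) (ht : 0 ≤ t) :
    normSqRatio α c t ≤ normSqRatio α 1 t := by
  unfold normSqRatio
  gcongr ?_ * _
  nlinarith

theorem eq_one_of_normSqRatio_eq (ht : 0 < t) (h : normSqRatio α c t = normSqRatio α 1 t) :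
    c = 1 := by
  have h' := mul_right_cancel₀ (Real.rpow_pos_of_pos ht (-(2 * α))).ne' h
  have : (c - 1) * t = 0 := by linarith
  exact sub_eq_zero.1 ((mul_eq_zero.1 this).resolve_right ht.ne')

theorem normSqRatioCrit_one_div_one_sub (hα1 : α ≠ 1) :
    normSqRatioCrit α 1 (α / (1 - α)) = 0 := by
  have : 1 - α ≠ 0 := sub_ne_zero.2 hα1.symm
  unfold normSqRatioCrit
  field_simp
  ring

theorem normSqRatio_ne_of_lt {a b : ℝ} (hα0 : 0 ≤ α) (hα1 : α < 1) (hc : c ≤ 1)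
    (ha : 0 < a) (hab : a < b) (hbz : b ≤ α / (1 - α))
    (hb : normSqRatio α c b = normSqRatio α 1 (α / (1 - α))) :
    normSqRatio α c a ≠ normSqRatio α c b := by
  intro hab_eq
  obtain ⟨ξ, hξ, hderiv⟩ := exists_hasDerivAt_eq_zero hab
    (fun t ht => (hasDerivAt_normSqRatio (ha.trans_le ht.1)).continuousAt.continuousWithinAt)
    hab_eq (fun t ht => hasDerivAt_normSqRatio (ha.trans ht.1))
  have hξ0 : 0 < ξ := ha.trans hξ.1
  have hcrit : normSqRatioCrit α c ξ = 0 := by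
    simpa [(Real.rpow_pos_of_pos hξ0 _).ne'] using hderiv
  have hmono := strictMonoOn_normSqRatio hα0 hα1 hξ0 hcrit.le
  have hbz' : b = α / (1 - α) := by
    refine hbz.eq_or_lt.resolve_right fun hlt => ?_
    have := hmono (mem_Ici.2 hξ.2.le) (mem_Ici.2 (hξ.2.trans hlt).le) hlt
    have := normSqRatio_le_normSqRatio_one (α := α) hc (hξ0.trans (hξ.2.trans hlt)).le
    linarith
  subst hbz'
  obtain rfl : c = 1 := eq_one_of_normSqRatio_eq (hξ0.trans hξ.2) hb
  have := normSqRatioCrit_neg_of_lt hα0 hα1 hξ0 hξ.2 hcrit.le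
  rw [normSqRatioCrit_one_div_one_sub hα1.ne] at this
  exact lt_irrefl 0 this

theorem subsingleton_normSqRatio_eq (hα0 : 0 ≤ α) (hα1 : α < 1) (hc : c ≤ 1) :
    {t ∈ Ioc 0 (α / (1 - α)) |
      normSqRatio α c t = normSqRatio α 1 (α / (1 - α))}.Subsingleton := by
  rintro a ⟨⟨ha, haz⟩, hra⟩ b ⟨⟨hb, hbz⟩, hrb⟩
  rcases lt_trichotomy a b with hab | hab | hab
  · exact (normSqRatio_ne_of_lt hα0 hα1 hc ha hab hbz hrb (hra.trans hrb.symm)).elim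
  · exact hab
  · exact (normSqRatio_ne_of_lt hα0 hα1 hc hb hab haz hra (hrb.trans hra.symm)).elim

end NormSqRatio

section Curve

variable {α : ℝ}

theorem Kconst_pos (hα0 : 0 < α) (hα1 : α < 1) : 0 < Kconst α := by
  have := sub_pos.2 hα1
  unfold Kconst
  positivity

theorem Kconst_mul_one_add_div_one_sub (hα0 : 0 < α) (hα1 : α < 1) :
    Kconst α * (1 + α / (1 - α)) = (α / (1 - α)) ^ α := by
  have h1 : 0 < 1 - α := sub_pos.2 hα1
  have hb : (1 - α) ^ (1 - α) * (1 - α) ^ α = 1 - α := by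
    rw [← Real.rpow_add h1]; norm_num
  have hd : 0 < (1 - α) ^ α := Real.rpow_pos_of_pos h1 α
  rw [Real.div_rpow hα0.le h1.le, show 1 + α / (1 - α) = 1 / (1 - α) by field_simp; ring,
    mul_one_div, div_eq_div_iff h1.ne' hd.ne']
  unfold Kconst
  linear_combination α ^ α * hb

theorem norm_ofReal_mul_exp {t : ℝ} (ht : 0 ≤ t) (θ : ℝ) :
    ‖(t : ℂ) * Complex.exp (θ * Complex.I)‖ = t := by
  rw [norm_mul, Complex.norm_exp_ofReal_mul_I, Complex.norm_of_nonneg ht, mul_one]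

theorem norm_one_add_ofReal_mul_exp_sq (t θ : ℝ) :
    ‖1 + (t : ℂ) * Complex.exp (θ * Complex.I)‖ ^ 2 = 1 + 2 * Real.cos θ * t + t ^ 2 := by
  rw [← Complex.normSq_eq_norm_sq]
  simp [Complex.normSq_apply, Complex.exp_mul_I, Complex.cos_ofReal_re, Complex.sin_ofReal_re]
  nlinarith [Real.sin_sq_add_cos_sq θ]

theorem normSqRatio_cos_eq {t : ℝ} (ht : 0 < t) (θ : ℝ) :
    normSqRatio α (Real.cos θ) t =
      (‖1 + (t : ℂ) * Complex.exp (θ * Complex.I)‖ / t ^ α) ^ 2 := by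
  rw [normSqRatio, ← norm_one_add_ofReal_mul_exp_sq, div_pow, div_eq_mul_inv, Real.rpow_neg ht.le,
    mul_comm 2 α, Real.rpow_mul ht.le, Real.rpow_two]

theorem normSqRatio_one_div_one_sub (hα0 : 0 < α) (hα1 : α < 1) :
    normSqRatio α 1 (α / (1 - α)) = (Kconst α)⁻¹ ^ 2 := by
  have hz : 0 < α / (1 - α) := div_pos hα0 (sub_pos.2 hα1)
  have h1z : (1 : ℂ) + ((α / (1 - α) : ℝ) : ℂ) * Complex.exp ((0 : ℝ) * Complex.I)
      = ((1 + α / (1 - α) : ℝ) : ℂ) := by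
    push_cast; simp
  have := normSqRatio_cos_eq (α := α) hz 0
  rw [Real.cos_zero] at this
  rw [this, h1z, Complex.norm_of_nonneg (by positivity),
    ← Kconst_mul_one_add_div_one_sub hα0 hα1, div_mul_cancel_right₀ (by positivity)]

theorem rpow_eq_Kconst_mul_norm_iff (hα0 : 0 < α) (hα1 : α < 1) {t : ℝ} (ht : 0 < t)
    (θ : ℝ) :
    t ^ α = Kconst α * ‖1 + (t : ℂ) * Complex.exp (θ * Complex.I)‖ ↔
      normSqRatio α (Real.cos θ) t = normSqRatio α 1 (α / (1 - α)) := by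
  have hK := Kconst_pos hα0 hα1
  have htα := Real.rpow_pos_of_pos ht α
  rw [normSqRatio_cos_eq ht, normSqRatio_one_div_one_sub hα0 hα1,
    sq_eq_sq₀ (by positivity) (by positivity), div_eq_iff htα.ne',
    eq_inv_mul_iff_mul_eq₀ hK.ne', eq_comm]

theorem exists_rpow_eq_Kconst_mul_norm (hα0 : 0 < α) (hα1 : α < 1) (θ : ℝ) :
    ∃ x : ℝ, 0 < x ∧ x ≤ α / (1 - α) ∧
      x ^ α = Kconst α * ‖1 + (x : ℂ) * Complex.exp (θ * Complex.I)‖ := by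
  have hz : 0 < α / (1 - α) := div_pos hα0 (sub_pos.2 hα1)
  have hK := Kconst_pos hα0 hα1
  set f : ℝ → ℝ :=
    fun t => t ^ α - Kconst α * ‖1 + (t : ℂ) * Complex.exp (θ * Complex.I)‖
  have hcont : ContinuousOn f (Icc 0 (α / (1 - α))) := by fun_prop (disch := positivity)
  have hf0 : f 0 < 0 := by simp [f, Real.zero_rpow hα0.ne', hK]
  have hfz : 0 ≤ f (α / (1 - α)) := by
    have := norm_add_le (1 : ℂ) (((α / (1 - α) : ℝ) : ℂ) * Complex.exp (θ * Complex.I))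
    rw [norm_one, norm_ofReal_mul_exp hz.le] at this
    simp only [f, sub_nonneg, ← Kconst_mul_one_add_div_one_sub hα0 hα1]
    gcongr
  obtain ⟨x, hx, hfx⟩ := intermediate_value_Icc hz.le hcont ⟨hf0.le, hfz⟩
  have hx0 : x ≠ 0 := by rintro rfl; exact hf0.ne hfx
  exact ⟨x, hx.1.lt_of_ne' hx0, hx.2, sub_eq_zero.1 hfx⟩

theorem existsUnique_rpow_eq_Kconst_mul_norm (hα0 : 0 < α) (hα1 : α < 1) (θ : ℝ) :
    ∃! x : ℝ, 0 < x ∧ x ≤ α / (1 - α) ∧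
      x ^ α = Kconst α * ‖1 + (x : ℂ) * Complex.exp (θ * Complex.I)‖ := by
  obtain ⟨x, hx0, hxz, hx⟩ := exists_rpow_eq_Kconst_mul_norm hα0 hα1 θ
  refine ⟨x, ⟨hx0, hxz, hx⟩, fun y ⟨hy0, hyz, hy⟩ => ?_⟩
  exact subsingleton_normSqRatio_eq hα0.le hα1 (Real.cos_le_one θ)
    ⟨⟨hy0, hyz⟩, (rpow_eq_Kconst_mul_norm_iff hα0 hα1 hy0 θ).1 hy⟩
    ⟨⟨hx0, hxz⟩, (rpow_eq_Kconst_mul_norm_iff hα0 hα1 hx0 θ).1 hx⟩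

theorem mem_curveC_iff (hα0 : 0 < α) (hα1 : α < 1) {w : ℂ} (hw : w ≠ 0) :
    w ∈ curveC α ↔ ‖w‖ ^ α = Kconst α * ‖1 + w‖ ∧ ‖w‖ ≤ α / (1 - α) := by
  by_cases h : ‖1 + w‖ = 0
  · have := Real.rpow_pos_of_pos (norm_pos_iff.2 hw) α
    simp [curveC, h, (Kconst_pos hα0 hα1).ne, this.ne']
  · rw [curveC, mem_ofPred_eq, div_eq_iff h]

end Curve

theorem curveC_simple_starlike (α : ℝ) (hα0 : 0 < α) (hα1 : α < 1) :
    (∀ θ ∈ Set.Icc (0 : ℝ) Real.pi, ∃! x : ℝ, 0 < x ∧ x ≤ α / (1 - α) ∧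
        x ^ α = Kconst α * ‖1 + (x : ℂ) * Complex.exp (θ * Complex.I)‖) ∧
    (∀ z ∈ curveC α, (starRingEnd ℂ) z ∈ curveC α) ∧
    (∀ θ ∈ Set.Icc (-Real.pi) Real.pi,
        ∃! x : ℝ, 0 < x ∧ (x : ℂ) * Complex.exp (θ * Complex.I) ∈ curveC α) ∧
    ((α / (1 - α) : ℝ) : ℂ) ∈ curveC α := by
  have hz : 0 < α / (1 - α) := div_pos hα0 (sub_pos.2 hα1)
  refine ⟨fun θ _ => existsUnique_rpow_eq_Kconst_mul_norm hα0 hα1 θ, ?_, fun θ _ => ?_, ?_⟩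
  · rintro w ⟨hw, hwz⟩
    have : (1 : ℂ) + (starRingEnd ℂ) w = (starRingEnd ℂ) (1 + w) := by simp
    exact ⟨by rwa [Complex.norm_conj, this, Complex.norm_conj], by rwa [Complex.norm_conj]⟩
  · refine (existsUnique_congr fun x => and_congr_right fun hx => ?_).1
      (existsUnique_rpow_eq_Kconst_mul_norm hα0 hα1 θ)
    have hw : (x : ℂ) * Complex.exp (θ * Complex.I) ≠ 0 :=
      mul_ne_zero (Complex.ofReal_ne_zero.2 hx.ne') (Complex.exp_ne_zero _)
    rw [mem_curveC_iff hα0 hα1 hw, norm_ofReal_mul_exp hx.le, and_comm]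
  · have h1z : (1 : ℂ) + ((α / (1 - α) : ℝ) : ℂ) = ((1 + α / (1 - α) : ℝ) : ℂ) := by
      push_cast; rfl
    rw [mem_curveC_iff hα0 hα1 (Complex.ofReal_ne_zero.2 hz.ne'), h1z,
      Complex.norm_of_nonneg hz.le, Complex.norm_of_nonneg (by positivity),
      Kconst_mul_one_add_div_one_sub hα0 hα1]
    exact ⟨rfl, le_rfl⟩
end

section
/- Let (b_k)_{k≥0} be a sequence of nonnegative reals with b_0 > b_1 ≥ 0 and b_1 b_{k-1} - b_0 b_k ≥ 0 for all k ≥ 1 (so that b_k ≤ (b_1/b_0)^k b_0, and f(z) = ∑_{k=0}^∞ b_k z^k converges absolutely for |z| ≤ 1). Then for every z ∈ ℂ with |z| ≤ 1, |f(z)| ≥ ((b_0 - b_1)/(b_0 + b_1)) · f(1). -/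
/-!
With `c k = b 1 * b k - b 0 * b (k + 1) ≥ 0`, multiplying the series by `b 0 - b 1 * z` telescopes:
`(b 0 - b 1 * z) f(z) = b 0 ^ 2 - ∑ c k z ^ (k + 1)`. For `‖z‖ ≤ 1` the last sum is bounded by its
value at `z = 1`, which is `b 0 ^ 2 - (b 0 - b 1) f(1)`; hence `‖(b 0 - b 1 * z) f(z)‖ ≥ (b 0 - b 1) f(1)`,
and it remains to use `‖b 0 - b 1 * z‖ ≤ b 0 + b 1`.
-/

theorem sub_mul_tsum_mul_pow {R : Type*} [CommRing R] [TopologicalSpace R] [IsTopologicalRing R]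
    [T2Space R] (a : ℕ → R) (α β z : R) (h : Summable fun k ↦ a k * z ^ k) :
    (α - β * z) * ∑' k, a k * z ^ k =
      α * a 0 - ∑' k, (β * a k - α * a (k + 1)) * z ^ (k + 1) := by
  have h₁ : Summable fun k ↦ a (k + 1) * z ^ (k + 1) := (summable_nat_add_iff 1).2 h
  have hshift : ∑' k, (β * a k - α * a (k + 1)) * z ^ (k + 1) =
      β * z * ∑' k, a k * z ^ k - α * ∑' k, a (k + 1) * z ^ (k + 1) := by
    rw [← h.tsum_mul_left, ← h₁.tsum_mul_left, ← (h.mul_left _).tsum_sub (h₁.mul_left _)]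
    exact tsum_congr fun k ↦ by ring
  rw [hshift, h.tsum_eq_zero_add]
  ring

theorem norm_ofReal_mul_pow_le {c : ℝ} (hc : 0 ≤ c) {z : ℂ} (hz : ‖z‖ ≤ 1) (n : ℕ) :
    ‖(c : ℂ) * z ^ n‖ ≤ c := by
  rw [norm_mul, norm_pow, Complex.norm_of_nonneg hc]
  exact mul_le_of_le_one_right hc (pow_le_one₀ (norm_nonneg z) hz)

section

variable {b : ℕ → ℝ} (hpos : ∀ k, 0 ≤ b k) (hb01 : b 1 < b 0)
  (hrec : ∀ k, b 0 * b (k + 1) ≤ b 1 * b k)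
include hpos hb01 hrec

theorem summable_of_mul_succ_le : Summable b := by
  have hb0 : 0 < b 0 := (hpos 1).trans_lt hb01
  refine summable_of_ratio_norm_eventually_le ((div_lt_one hb0).2 hb01) (.of_forall fun k ↦ ?_)
  rw [Real.norm_of_nonneg (hpos _), Real.norm_of_nonneg (hpos _), div_mul_eq_mul_div,
    le_div_iff₀ hb0, mul_comm]
  exact hrec k

theorem sub_mul_tsum_le_norm {z : ℂ} (hz : ‖z‖ ≤ 1) :
    (b 0 - b 1) * ∑' k, b k ≤ ‖((b 0 : ℂ) - b 1 * z) * ∑' k, (b k : ℂ) * z ^ k‖ := by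
  have hc : ∀ k, 0 ≤ b 1 * b k - b 0 * b (k + 1) := fun k ↦ sub_nonneg.2 (hrec k)
  have hb : Summable b := summable_of_mul_succ_le hpos hb01 hrec
  have hF : Summable fun k ↦ (b k : ℂ) * z ^ k :=
    hb.of_norm_bounded fun k ↦ norm_ofReal_mul_pow_le (hpos k) hz k
  -- the same telescoping identity at `z = 1` evaluates the sum of the `c k`
  have hreal := sub_mul_tsum_mul_pow b (b 0) (b 1) 1 (by simpa using hb)
  simp only [one_pow, mul_one] at hreal
  have hc_sum : Summable fun k ↦ b 1 * b k - b 0 * b (k + 1) :=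
    (hb.mul_left _).sub (((summable_nat_add_iff 1).2 hb).mul_left _)
  have hG : ‖∑' k, ((b 1 : ℂ) * b k - b 0 * b (k + 1)) * z ^ (k + 1)‖ ≤
      ∑' k, (b 1 * b k - b 0 * b (k + 1)) :=
    tsum_of_norm_bounded hc_sum.hasSum fun k ↦ by
      exact_mod_cast norm_ofReal_mul_pow_le (hc k) hz (k + 1)
  rw [sub_mul_tsum_mul_pow _ _ _ _ hF]
  calc (b 0 - b 1) * ∑' k, b k
      = b 0 * b 0 - ∑' k, (b 1 * b k - b 0 * b (k + 1)) := hreal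
    _ ≤ ‖(b 0 : ℂ) * b 0‖ - ‖∑' k, ((b 1 : ℂ) * b k - b 0 * b (k + 1)) * z ^ (k + 1)‖ := by
      rw [← Complex.ofReal_mul, Complex.norm_of_nonneg (mul_self_nonneg _)]
      linarith
    _ ≤ _ := norm_sub_norm_le _ _

end

theorem lower_bound_lemma_general (b : ℕ → ℝ)
    (hpos : ∀ k, 0 ≤ b k) (hb01 : b 1 < b 0)
    (hdec : ∀ k : ℕ, 1 ≤ k → 0 ≤ b 1 * b (k - 1) - b 0 * b k) :
    ∀ z : ℂ, ‖z‖ ≤ 1 →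
      (b 0 - b 1) / (b 0 + b 1) * (∑' k : ℕ, b k) ≤
        ‖∑' k : ℕ, (b k : ℂ) * z ^ k‖ := by
  intro z hz
  have hrec : ∀ k, b 0 * b (k + 1) ≤ b 1 * b k := fun k ↦
    sub_nonneg.1 (by simpa using hdec (k + 1) (Nat.le_add_left 1 k))
  have hfactor : ‖(b 0 : ℂ) - b 1 * z‖ ≤ b 0 + b 1 :=
    (norm_sub_le _ _).trans (add_le_add (Complex.norm_of_nonneg (hpos 0)).le
      (by simpa using norm_ofReal_mul_pow_le (hpos 1) hz 1))
  rw [div_mul_eq_mul_div, div_le_iff₀ (by linarith [hpos 1])]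
  calc (b 0 - b 1) * ∑' k, b k
      ≤ ‖((b 0 : ℂ) - b 1 * z) * ∑' k, (b k : ℂ) * z ^ k‖ := sub_mul_tsum_le_norm hpos hb01 hrec hz
    _ ≤ (b 0 + b 1) * ‖∑' k, (b k : ℂ) * z ^ k‖ := by
      rw [norm_mul]; exact mul_le_mul_of_nonneg_right hfactor (norm_nonneg _)
    _ = _ := mul_comm _ _

theorem lower_bound_lemma (b : ℕ → ℝ)
    (hpos : ∀ k, 0 ≤ b k) (hb1 : 0 ≤ b 1) (hb01 : b 1 < b 0)
    (hdec : ∀ k : ℕ, 1 ≤ k → 0 ≤ b 1 * b (k - 1) - b 0 * b k) :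
    ∀ z : ℂ, ‖z‖ ≤ 1 →
      (b 0 - b 1) / (b 0 + b 1) * (∑' k : ℕ, b k) ≤
        ‖∑' k : ℕ, (b k : ℂ) * z ^ k‖ :=
  lower_bound_lemma_general b hpos hb01 hdec
end

section
/- Let r, n be integers with 1 ≤ r < n, and set β = r/n. Then for every z ∈ ℂ with |z| ≤ β/(1-β), |R_{r,n}(z)| ≤ K_β^{-n} · ∑_{k=r+1}^{n} C(n,k) β^k (1-β)^{n-k} ≤ K_β^{-n}. -/
/-- For integers `1 ≤ r < n`, the remainder term `R_{r,n}(z) = ∑_{k=r+1}^n C(n,k) z^{k-r}`. -/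
noncomputable def binomialRemainder (r n : ℕ) (z : ℂ) : ℂ :=
  ∑ k ∈ Finset.Icc (r + 1) n, (n.choose k : ℂ) * z ^ (k - r)

open Finset

lemma norm_binomialRemainder_le {r n : ℕ} {z : ℂ} {q : ℝ} (hz : ‖z‖ ≤ q) :
    ‖binomialRemainder r n z‖ ≤ ∑ k ∈ Icc (r + 1) n, (n.choose k : ℝ) * q ^ (k - r) := by
  refine (norm_sum_le _ _).trans (sum_le_sum fun k _ => ?_)
  rw [norm_mul, norm_pow, Complex.norm_natCast]
  gcongr

lemma Kconst_pos_s15 {β : ℝ} (h0 : 0 ≤ β) (h1 : β < 1) : 0 < Kconst β := by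
  obtain rfl | hβ := h0.eq_or_lt
  · norm_num [Kconst]
  · exact mul_pos (Real.rpow_pos_of_pos hβ _) (Real.rpow_pos_of_pos (by linarith) _)

lemma Kconst_div_pow {r n : ℕ} (hn : n ≠ 0) (hrn : r ≤ n) :
    Kconst (r / n) ^ n = ((r : ℝ) / n) ^ r * (1 - (r : ℝ) / n) ^ (n - r) := by
  have hn' : (n : ℝ) ≠ 0 := by exact_mod_cast hn
  have hβ1 : (0 : ℝ) ≤ 1 - r / n := by
    rw [sub_nonneg, div_le_one (by positivity)]
    exact_mod_cast hrn
  have hr : (r : ℝ) / n * n = r := by field_simp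
  have hnr : (1 - (r : ℝ) / n) * n = (n - r : ℕ) := by rw [Nat.cast_sub hrn]; field_simp
  rw [Kconst, mul_pow, ← Real.rpow_mul_natCast (by positivity), ← Real.rpow_mul_natCast hβ1, hr,
    hnr, Real.rpow_natCast, Real.rpow_natCast]

lemma pow_mul_one_sub_pow_eq {β : ℝ} (hβ : β ≠ 1) {r k n : ℕ} (hrk : r ≤ k) (hkn : k ≤ n) :
    β ^ k * (1 - β) ^ (n - k) = β ^ r * (1 - β) ^ (n - r) * (β / (1 - β)) ^ (k - r) := by
  have h1β : 1 - β ≠ 0 := sub_ne_zero.mpr hβ.symm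
  obtain ⟨j, rfl⟩ := Nat.exists_eq_add_of_le hrk
  obtain ⟨m, rfl⟩ := Nat.exists_eq_add_of_le hkn
  rw [show r + j + m - r = m + j by omega, Nat.add_sub_cancel_left, Nat.add_sub_cancel_left,
    div_pow]
  field_simp
  ring

lemma pow_mul_one_sub_pow_mul_sum_eq {β : ℝ} (hβ : β ≠ 1) (r n : ℕ) :
    β ^ r * (1 - β) ^ (n - r) * ∑ k ∈ Icc (r + 1) n, (n.choose k : ℝ) * (β / (1 - β)) ^ (k - r) =
      ∑ k ∈ Icc (r + 1) n, (n.choose k : ℝ) * β ^ k * (1 - β) ^ (n - k) := by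
  rw [mul_sum]
  refine sum_congr rfl fun k hk => ?_
  obtain ⟨hrk, hkn⟩ := mem_Icc.mp hk
  rw [mul_assoc _ (β ^ k), pow_mul_one_sub_pow_eq hβ (Nat.le_of_succ_le hrk) hkn]
  ring

lemma sum_Icc_choose_mul_pow_mul_one_sub_pow_le_one {β : ℝ} (h0 : 0 ≤ β) (h1 : β ≤ 1)
    (a n : ℕ) : ∑ k ∈ Icc a n, (n.choose k : ℝ) * β ^ k * (1 - β) ^ (n - k) ≤ 1 := by
  have h1β : 0 ≤ 1 - β := sub_nonneg.mpr h1
  calc ∑ k ∈ Icc a n, (n.choose k : ℝ) * β ^ k * (1 - β) ^ (n - k)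
      ≤ ∑ k ∈ range (n + 1), (n.choose k : ℝ) * β ^ k * (1 - β) ^ (n - k) :=
        sum_le_sum_of_subset_of_nonneg (fun k hk => by simp at hk ⊢; omega)
          (fun _ _ _ => by positivity)
    _ = (β + (1 - β)) ^ n := by
        rw [add_pow]
        exact sum_congr rfl fun _ _ => by ring
    _ = 1 := by rw [add_sub_cancel, one_pow]

theorem remainder_upper_bound_general (r n : ℕ) (hrn : r < n)
    (β : ℝ) (hβ : β = (r : ℝ) / (n : ℝ))
    (z : ℂ) (hz : ‖z‖ ≤ β / (1 - β)) :
    ‖binomialRemainder r n z‖ ≤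
        Kconst β ^ (-(n : ℤ)) *
          ∑ k ∈ Finset.Icc (r + 1) n, (n.choose k : ℝ) * β ^ k * (1 - β) ^ (n - k) ∧
      Kconst β ^ (-(n : ℤ)) *
          ∑ k ∈ Finset.Icc (r + 1) n, (n.choose k : ℝ) * β ^ k * (1 - β) ^ (n - k) ≤
        Kconst β ^ (-(n : ℤ)) := by
  have hβ0 : 0 ≤ β := hβ ▸ by positivity
  have hβ1 : β < 1 := by
    rw [hβ, div_lt_one (by exact_mod_cast r.zero_le.trans_lt hrn)]
    exact_mod_cast hrn
  have hKn : Kconst β ^ n = β ^ r * (1 - β) ^ (n - r) := hβ ▸ Kconst_div_pow (by omega) hrn.le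
  have hK : 0 < Kconst β := Kconst_pos_s15 hβ0 hβ1
  have htail : Kconst β ^ (-(n : ℤ)) *
      ∑ k ∈ Icc (r + 1) n, (n.choose k : ℝ) * β ^ k * (1 - β) ^ (n - k) =
        ∑ k ∈ Icc (r + 1) n, (n.choose k : ℝ) * (β / (1 - β)) ^ (k - r) := by
    rw [← pow_mul_one_sub_pow_mul_sum_eq hβ1.ne, ← hKn, zpow_neg, zpow_natCast,
      inv_mul_cancel_left₀ (pow_ne_zero _ hK.ne')]
  exact ⟨htail ▸ norm_binomialRemainder_le hz, mul_le_of_le_one_right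
    (zpow_pos hK _).le (sum_Icc_choose_mul_pow_mul_one_sub_pow_le_one hβ0 hβ1.le _ _)⟩

theorem remainder_upper_bound (r n : ℕ) (hr : 1 ≤ r) (hrn : r < n)
    (β : ℝ) (hβ : β = (r : ℝ) / (n : ℝ))
    (z : ℂ) (hz : ‖z‖ ≤ β / (1 - β)) :
    ‖binomialRemainder r n z‖ ≤
        Kconst β ^ (-(n : ℤ)) *
          ∑ k ∈ Finset.Icc (r + 1) n, (n.choose k : ℝ) * β ^ k * (1 - β) ^ (n - k) ∧
      Kconst β ^ (-(n : ℤ)) *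
          ∑ k ∈ Finset.Icc (r + 1) n, (n.choose k : ℝ) * β ^ k * (1 - β) ^ (n - k) ≤
        Kconst β ^ (-(n : ℤ)) :=
  remainder_upper_bound_general r n hrn β hβ z hz
end
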